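/- Let h : P(V) → [0,∞) with h(∅) = 0 and f : P_2(V) → [0,∞) with f(∅,∅) = 0, and write x^± := max(±x, 0) componentwise for x ∈ ℝ^n. Then: (a) if f(A,B) = h(A) + h(V∖B) − h(V) for all (A,B) ∈ P_2(V), then f^L = h^L on ℝ^n; (b) if f(A,B) = h(A) + h(B) for all (A,B) ∈ P_2(V) and h(A) = h(V∖A) for all A ⊆ V, then f^L = h^L; (c) if f(A,B) = h(A) for all (A,B) ∈ P_2(V), then f^L(x) = h^L(x) for all x ∈ [0,∞)^n; (d) if f(A,B) = h(A ∪ B) for all (A,B) ∈ P_2(V), then f^L(x) = h^L(x^+ + x^−) for all x ∈ ℝ^n; (e) if f(A,B) = h(A) + h(B) (respectively h(A) − h(B)) for all (A,B) ∈ P_2(V), then f^L(x) = h^L(x^+) + h^L(x^−) (respectively h^L(x^+) − h^L(x^−)) for all x ∈ ℝ^n. -/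

import Mathlib

open Finset

/-- The Lovász extension of a set function `h : 𝒫(V) → ℝ` on `V = Fin n`. -/
noncomputable def lovasz {n : ℕ} (h : Finset (Fin n) → ℝ) (x : Fin n → ℝ) : ℝ :=
  (∫ t in (⨅ i, x i)..(⨆ i, x i), h (Finset.univ.filter (fun i => t < x i))) +
    h Finset.univ * (⨅ i, x i)

/-- The disjoint-pair Lovász extension of `f : 𝒫₂(V) → ℝ` (only values on disjoint
pairs are used). -/
noncomputable def dpLovasz {n : ℕ} (f : Finset (Fin n) → Finset (Fin n) → ℝ)
    (x : Fin n → ℝ) : ℝ :=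
  ∫ t in (0:ℝ)..(⨆ i, |x i|),
    f (Finset.univ.filter (fun i => t < x i)) (Finset.univ.filter (fun i => t < -x i))

/-! Both extensions are integrals over superlevel sets. Since `h ∅ = 0`, the Lovász integral
may be taken over any interval containing the range of `x`, in particular over `[-R, R]` with
`R = max |xᵢ|`. Substituting `t ↦ -t` on `[-R, 0]` turns the superlevel sets of `x` into the
complements of those of `-x`, up to finitely many `t`. For `t ≥ 0` the pair `(V₊ᵗ(x), V₋ᵗ(x))`
is disjoint, so each hypothesis on `f` rewrites the integrand of `f^L` pointwise, and every part
reduces to comparing integrands on `[0, R]`. -/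

open MeasureTheory intervalIntegral

section Superlevel

variable {ι : Type*} [Fintype ι]

/-- The paper's `V^t(x)`; its `V₋ᵗ(x)` is `superlevel (-x) t`. -/
noncomputable def superlevel (x : ι → ℝ) (t : ℝ) : Finset ι := univ.filter (t < x ·)

@[simp]
lemma mem_superlevel {x : ι → ℝ} {t : ℝ} {i : ι} : i ∈ superlevel x t ↔ t < x i := by
  simp [superlevel]

lemma superlevel_eq_univ {x : ι → ℝ} {t : ℝ} (ht : ∀ i, t < x i) : superlevel x t = univ := by
  ext i; simp [ht]

lemma superlevel_eq_empty {x : ι → ℝ} {t : ℝ} (ht : ∀ i, x i ≤ t) : superlevel x t = ∅ := by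
  ext i; simp [ht]

lemma superlevel_max_zero (x : ι → ℝ) {t : ℝ} (ht : 0 ≤ t) :
    superlevel (fun i => max (x i) 0) t = superlevel x t := by
  ext i; simp [ht.not_gt]

lemma superlevel_abs [DecidableEq ι] (x : ι → ℝ) (t : ℝ) :
    superlevel (fun i => |x i|) t = superlevel x t ∪ superlevel (-x) t := by
  ext i; simp [lt_abs]

lemma disjoint_superlevel_neg (x : ι → ℝ) {t : ℝ} (ht : 0 ≤ t) :
    Disjoint (superlevel x t) (superlevel (-x) t) := by
  refine Finset.disjoint_left.2 fun i h₁ h₂ => ?_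
  simp only [mem_superlevel, Pi.neg_apply] at h₁ h₂
  linarith

lemma ae_superlevel_neg [DecidableEq ι] (x : ι → ℝ) :
    ∀ᵐ t, superlevel x (-t) = univ \ superlevel (-x) t := by
  filter_upwards [(Set.finite_range (-x)).countable.ae_notMem volume] with t ht
  ext i
  have hne : -x i ≠ t := fun h => ht ⟨i, h⟩
  simp only [mem_superlevel, mem_sdiff, mem_univ, true_and, Pi.neg_apply, not_lt]
  rw [neg_lt]
  exact ⟨le_of_lt, fun h => lt_of_le_of_ne h hne⟩

lemma measurable_superlevel (x : ι → ℝ) : Measurable (superlevel x) := by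
  refine measurable_finset_iff.2 fun i => ?_
  simp only [mem_superlevel]
  exact measurableSet_setOfPred.1 measurableSet_Iio

lemma intervalIntegrable_comp_superlevel (g : Finset ι → ℝ) (x : ι → ℝ) (a b : ℝ) :
    IntervalIntegrable (fun t => g (superlevel x t)) volume a b := by
  rw [intervalIntegrable_iff]
  exact Measure.integrableOn_of_bounded measure_Ioc_lt_top.ne
    ((measurable_of_countable g).comp (measurable_superlevel x)).aestronglyMeasurable
    (ae_of_all _ fun t => le_ciSup (Set.finite_range fun A => ‖g A‖).bddAbove (superlevel x t))

end Superlevel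

lemma iSup_abs_nonneg {ι : Type*} (x : ι → ℝ) : 0 ≤ ⨆ i, |x i| :=
  Real.iSup_nonneg fun _ => abs_nonneg _

section Lovasz

variable {n : ℕ} {h : Finset (Fin n) → ℝ}

lemma lovasz_eq_integral (hh0 : h ∅ = 0) {x : Fin n → ℝ} {a b : ℝ} (ha : a ≤ ⨅ i, x i)
    (hb : ⨆ i, x i ≤ b) :
    lovasz h x = (∫ t in a..b, h (superlevel x t)) + h univ * a := by
  set m := ⨅ i, x i
  set M := ⨆ i, x i
  have hint := intervalIntegrable_comp_superlevel h x
  have below : ∫ t in a..m, h (superlevel x t) = (m - a) * h univ := by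
    have : ∫ t in a..m, h (superlevel x t) = ∫ t in a..m, h univ := by
      refine integral_congr_ae ?_
      filter_upwards [(Set.countable_singleton m).ae_notMem volume] with t htm ht
      rw [Set.uIoc_of_le ha] at ht
      exact congrArg h <| superlevel_eq_univ fun i =>
        (lt_of_le_of_ne ht.2 htm).trans_le (ciInf_le (Set.finite_range x).bddBelow i)
    rw [this, intervalIntegral.integral_const, smul_eq_mul]
  have above : ∫ t in M..b, h (superlevel x t) = 0 := by
    rw [← intervalIntegral.integral_zero]
    refine integral_congr fun t ht => ?_
    rw [Set.uIcc_of_le hb] at ht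
    simp only [superlevel_eq_empty fun i => (le_ciSup (Set.finite_range x).bddAbove i).trans ht.1, hh0]
  rw [← integral_add_adjacent_intervals (hint a M) (hint M b),
    ← integral_add_adjacent_intervals (hint a m) (hint m M), below, above]
  show (∫ t in m..M, h (superlevel x t)) + h univ * m = _
  ring

lemma lovasz_eq_integral_of_nonneg (hh0 : h ∅ = 0) {x : Fin n → ℝ} (hx : ∀ i, 0 ≤ x i) {R : ℝ}
    (hR : ⨆ i, x i ≤ R) :
    lovasz h x = ∫ t in 0..R, h (superlevel x t) := by
  rw [lovasz_eq_integral hh0 (Real.iInf_nonneg hx) hR, mul_zero, add_zero]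

lemma lovasz_eq_integral_symm (hh0 : h ∅ = 0) (x : Fin n → ℝ) :
    lovasz h x = ∫ t in 0..⨆ i, |x i|,
      (h (superlevel x t) + h (univ \ superlevel (-x) t) - h univ) := by
  set R := ⨆ i, |x i|
  have hxR : ∀ i, |x i| ≤ R := le_ciSup (Set.finite_range _).bddAbove
  have hint := intervalIntegrable_comp_superlevel h x
  have hint' := intervalIntegrable_comp_superlevel (fun B => h (univ \ B)) (-x)
  have reflect : ∫ t in -R..0, h (superlevel x t) = ∫ t in 0..R, h (univ \ superlevel (-x) t) := by
    have := integral_comp_neg (a := 0) (b := R) fun t => h (superlevel x t)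
    rw [neg_zero] at this
    rw [← this]
    refine integral_congr_ae ?_
    filter_upwards [ae_superlevel_neg x] with t ht _
    rw [ht]
  rw [lovasz_eq_integral hh0 (Real.le_iInf (fun i => neg_le_of_abs_le (hxR i))
      (neg_nonpos.2 (iSup_abs_nonneg x)))
      (Real.iSup_le (fun i => (le_abs_self _).trans (hxR i)) (iSup_abs_nonneg x)),
    ← integral_add_adjacent_intervals (hint (-R) 0) (hint 0 R), reflect,
    integral_sub ((hint 0 R).add (hint' 0 R)) intervalIntegrable_const,
    integral_add (hint 0 R) (hint' 0 R), intervalIntegral.integral_const, smul_eq_mul]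
  ring

lemma lovasz_max_zero (hh0 : h ∅ = 0) (x : Fin n → ℝ) :
    lovasz h (fun i => max (x i) 0) = ∫ t in 0..⨆ i, |x i|, h (superlevel x t) := by
  rw [lovasz_eq_integral_of_nonneg hh0 (fun i => le_max_right _ _)
    (ciSup_mono (Set.finite_range _).bddAbove fun i => max_le (le_abs_self _) (abs_nonneg _))]
  refine integral_congr fun t ht => ?_
  rw [Set.uIcc_of_le (iSup_abs_nonneg x)] at ht
  simp only [superlevel_max_zero x ht.1]

lemma lovasz_max_neg_zero (hh0 : h ∅ = 0) (x : Fin n → ℝ) :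
    lovasz h (fun i => max (-x i) 0) = ∫ t in 0..⨆ i, |x i|, h (superlevel (-x) t) := by
  simpa using lovasz_max_zero hh0 (-x)

lemma dpLovasz_eq_integral {f F : Finset (Fin n) → Finset (Fin n) → ℝ}
    (hF : ∀ A B, Disjoint A B → f A B = F A B) (x : Fin n → ℝ) :
    dpLovasz f x = ∫ t in 0..⨆ i, |x i|, F (superlevel x t) (superlevel (-x) t) := by
  refine integral_congr fun t ht => ?_
  rw [Set.uIcc_of_le (iSup_abs_nonneg x)] at ht
  exact hF _ _ (disjoint_superlevel_neg x ht.1)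

end Lovasz

theorem dpLovasz_lovasz_relations_general {n : ℕ}
    (h : Finset (Fin n) → ℝ) (hh0 : h ∅ = 0)
    (f : Finset (Fin n) → Finset (Fin n) → ℝ) :
    -- (a)
    ((∀ A B : Finset (Fin n), Disjoint A B →
        f A B = h A + h (Finset.univ \ B) - h Finset.univ) →
      dpLovasz f = lovasz h) ∧
    -- (b)
    ((∀ A B : Finset (Fin n), Disjoint A B → f A B = h A + h B) →
      (∀ A : Finset (Fin n), h A = h (Finset.univ \ A)) →
      dpLovasz f = lovasz h) ∧
    -- (c)
    ((∀ A B : Finset (Fin n), Disjoint A B → f A B = h A) →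
      ∀ x : Fin n → ℝ, (∀ i, 0 ≤ x i) → dpLovasz f x = lovasz h x) ∧
    -- (d)
    ((∀ A B : Finset (Fin n), Disjoint A B → f A B = h (A ∪ B)) →
      ∀ x : Fin n → ℝ,
        dpLovasz f x = lovasz h (fun i => max (x i) 0 + max (-x i) 0)) ∧
    -- (e), "+" version
    ((∀ A B : Finset (Fin n), Disjoint A B → f A B = h A + h B) →
      ∀ x : Fin n → ℝ,
        dpLovasz f x =
          lovasz h (fun i => max (x i) 0) + lovasz h (fun i => max (-x i) 0)) ∧
    -- (e), "−" version
    ((∀ A B : Finset (Fin n), Disjoint A B → f A B = h A - h B) →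
      ∀ x : Fin n → ℝ,
        dpLovasz f x =
          lovasz h (fun i => max (x i) 0) - lovasz h (fun i => max (-x i) 0)) := by
  have part_a (hf : ∀ A B : Finset (Fin n), Disjoint A B →
      f A B = h A + h (univ \ B) - h univ) : dpLovasz f = lovasz h :=
    funext fun x => by rw [dpLovasz_eq_integral hf, lovasz_eq_integral_symm hh0]
  have hint := intervalIntegrable_comp_superlevel h
  refine ⟨part_a, fun hf hcompl => part_a fun A B hAB => ?_, fun hf x hx => ?_, fun hf x => ?_,
    fun hf x => ?_, fun hf x => ?_⟩
  · have huniv : h univ = 0 := by rw [hcompl, sdiff_self, bot_eq_empty, hh0]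
    rw [hf A B hAB, ← hcompl B, huniv, sub_zero]
  · rw [dpLovasz_eq_integral hf, ← lovasz_max_zero hh0]
    simp only [max_eq_left (hx _)]
  · have habs : (fun i => max (x i) 0 + max (-x i) 0) = fun i => |x i| :=
      funext fun i => max_zero_add_max_neg_zero_eq_abs_self (x i)
    rw [dpLovasz_eq_integral hf, habs,
      lovasz_eq_integral_of_nonneg hh0 (fun i => abs_nonneg _) le_rfl]
    simp only [superlevel_abs]
  · rw [dpLovasz_eq_integral hf, lovasz_max_zero hh0, lovasz_max_neg_zero hh0,
      integral_add (hint x _ _) (hint (-x) _ _)]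
  · rw [dpLovasz_eq_integral hf, lovasz_max_zero hh0, lovasz_max_neg_zero hh0,
      integral_sub (hint x _ _) (hint (-x) _ _)]

/-- Relations between the original and the disjoint-pair Lovász extensions
(parts (a)–(e)); here `x⁺ i = max (x i) 0` and `x⁻ i = max (-x i) 0`. -/
theorem dpLovasz_lovasz_relations {n : ℕ} (hn : 1 ≤ n)
    (h : Finset (Fin n) → ℝ) (hh : ∀ A, 0 ≤ h A) (hh0 : h ∅ = 0)
    (f : Finset (Fin n) → Finset (Fin n) → ℝ)
    (hf : ∀ A B : Finset (Fin n), Disjoint A B → 0 ≤ f A B) (hf0 : f ∅ ∅ = 0) :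
    -- (a)
    ((∀ A B : Finset (Fin n), Disjoint A B →
        f A B = h A + h (Finset.univ \ B) - h Finset.univ) →
      dpLovasz f = lovasz h) ∧
    -- (b)
    ((∀ A B : Finset (Fin n), Disjoint A B → f A B = h A + h B) →
      (∀ A : Finset (Fin n), h A = h (Finset.univ \ A)) →
      dpLovasz f = lovasz h) ∧
    -- (c)
    ((∀ A B : Finset (Fin n), Disjoint A B → f A B = h A) →
      ∀ x : Fin n → ℝ, (∀ i, 0 ≤ x i) → dpLovasz f x = lovasz h x) ∧
    -- (d)
    ((∀ A B : Finset (Fin n), Disjoint A B → f A B = h (A ∪ B)) →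
      ∀ x : Fin n → ℝ,
        dpLovasz f x = lovasz h (fun i => max (x i) 0 + max (-x i) 0)) ∧
    -- (e), "+" version
    ((∀ A B : Finset (Fin n), Disjoint A B → f A B = h A + h B) →
      ∀ x : Fin n → ℝ,
        dpLovasz f x =
          lovasz h (fun i => max (x i) 0) + lovasz h (fun i => max (-x i) 0)) ∧
    -- (e), "−" version
    ((∀ A B : Finset (Fin n), Disjoint A B → f A B = h A - h B) →
      ∀ x : Fin n → ℝ,
        dpLovasz f x =
          lovasz h (fun i => max (x i) 0) - lovasz h (fun i => max (-x i) 0)) :=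
  dpLovasz_lovasz_relations_general h hh0 f
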